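/- arXiv:1509.00637 — 2 statements merged into one kernel-verified Lean document; each statement's English description precedes it below -/
import Mathlib

section
/- Let {Y(x) : x ∈ ℤ²} be independent and identically distributed random variables with common distribution function F_Y(y) = exp(−y^{−1}/9) for y > 0, and define Z(x) = 9·Y(x) if π_1(x) = π_2(x), and Z(x) = ⋁_{y∈E(x)} Y(y) otherwise, where E(x) = {y ∈ ℤ² : |π_1(y) − π_1(x)| ≤ 1 and |π_2(y) − π_2(x)| ≤ 1}. Let A_n = {x ∈ ℤ² : −n ≤ π_1(x) ≤ n and (−n) ∨ (π_1(x) − n) ≤ π_2(x) ≤ (π_1(x) + n) ∧ n}, so f(n) = #A_n = 3n² + 3n + 1. Then each Z(x) has unit Fréchet distribution F(y) = exp(−y^{−1}), and for u_n(τ) = f(n)/τ one has P(⋁_{x∈A_n} Z(x) ≤ u_n(τ)) → exp(−τ/9) as n → ∞; that is, the sequence Z_A = {Z(x) : x ∈ A_n}_{n≥1} has spatial extremal index θ_A = 1/9. -/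
/-!
Off the diagonal, `Z(x)` is the maximum of nine independent copies of `Y`, and on the diagonal it
is `9 Y(x)`; both are unit Fréchet. The event `⋁_{x ∈ Aₙ} Z(x) ≤ u` says exactly that `Y ≤ u/9`
at the `2n + 1` diagonal sites of `Aₙ` and `Y ≤ u` at the off-diagonal sites of the union of the
boxes `E(x)`, `x ∈ Aₙ` off the diagonal. There are between `#Aₙ - (2n + 1)` and `#A_{n+2}` of the
latter, so with `u = #Aₙ / τ` the probability is `exp (-τ (o(1) + (1 + o(1)) / 9))`.

In lattice coordinates `Aₙ` is a regular hexagon: the origin together with three copies of the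
parallelogram `[1, n] × [0, n]`, rotated by a third of a turn. Hence `#Aₙ = 3n(n + 1) + 1`.
-/

open MeasureTheory Filter Topology

noncomputable section

variable {Ω : Type*} [MeasurableSpace Ω]

/-- The 3×3 square of neighbors `E(x) = {y : |π₁(y)-π₁(x)| ≤ 1 ∧ |π₂(y)-π₂(x)| ≤ 1}`. -/
def Ebox (x : ℤ × ℤ) : Finset (ℤ × ℤ) :=
  Finset.Icc (x.1 - 1) (x.1 + 1) ×ˢ Finset.Icc (x.2 - 1) (x.2 + 1)

lemma Ebox_nonempty (x : ℤ × ℤ) : (Ebox x).Nonempty :=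
  ⟨x, by simp [Ebox, Finset.mem_Icc]⟩

/-- The 1-dependent field of Example 3.2: `Z(x) = 9 Y(x)` on the diagonal and
`Z(x) = ⋁_{y ∈ E(x)} Y(y)` off the diagonal. -/
def Zfield (Y : ℤ × ℤ → Ω → ℝ) (x : ℤ × ℤ) (ω : Ω) : ℝ :=
  if x.1 = x.2 then 9 * Y x ω else (Ebox x).sup' (Ebox_nonempty x) fun y => Y y ω

/-- `Aₙ = {x ∈ ℤ² : -n ≤ π₁(x) ≤ n, (-n) ∨ (π₁(x)-n) ≤ π₂(x) ≤ (π₁(x)+n) ∧ n}`. -/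
def Adiam (n : ℕ) : Finset (ℤ × ℤ) :=
  (Finset.Icc (-(n : ℤ)) (n : ℤ) ×ˢ Finset.Icc (-(n : ℤ)) (n : ℤ)).filter fun x =>
    (-(n : ℤ)) ⊔ (x.1 - (n : ℤ)) ≤ x.2 ∧ x.2 ≤ (x.1 + (n : ℤ)) ⊓ (n : ℤ)

open Finset

lemma mem_Adiam {n : ℕ} {x : ℤ × ℤ} : x ∈ Adiam n ↔
    -(n : ℤ) ≤ x.1 ∧ x.1 ≤ n ∧ -(n : ℤ) ≤ x.2 ∧ x.2 ≤ n ∧ x.1 - x.2 ≤ n ∧ x.2 - x.1 ≤ n := by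
  simp only [Adiam, mem_filter, mem_product, mem_Icc, sup_le_iff, le_inf_iff]
  omega

lemma mem_Ebox {x y : ℤ × ℤ} :
    y ∈ Ebox x ↔ x.1 - 1 ≤ y.1 ∧ y.1 ≤ x.1 + 1 ∧ x.2 - 1 ≤ y.2 ∧ y.2 ≤ x.2 + 1 := by
  simp only [Ebox, mem_product, mem_Icc, and_assoc]

lemma card_Ebox (x : ℤ × ℤ) : (Ebox x).card = 9 := by
  have three (a : ℤ) : (a + 1 + 1 - (a - 1)).toNat = 3 := by omega
  simp only [Ebox, card_product, Int.card_Icc, three]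

def hexRot : ℤ × ℤ ≃ ℤ × ℤ where
  toFun p := (p.2 - p.1, -p.1)
  invFun p := (-p.2, p.1 - p.2)
  left_inv p := by ext <;> simp
  right_inv p := by ext <;> simp

def hexSector (n : ℕ) : Finset (ℤ × ℤ) := Icc 1 (n : ℤ) ×ˢ Icc 0 (n : ℤ)

lemma mem_hexSector {n : ℕ} {x : ℤ × ℤ} :
    x ∈ hexSector n ↔ 1 ≤ x.1 ∧ x.1 ≤ n ∧ 0 ≤ x.2 ∧ x.2 ≤ n := by
  simp only [hexSector, mem_product, mem_Icc, and_assoc]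

lemma card_hexSector (n : ℕ) : (hexSector n).card = n * (n + 1) := by
  simp only [hexSector, card_product, Int.card_Icc, add_sub_cancel_right, sub_zero]
  norm_cast

lemma Adiam_eq_insert_hexSectors (n : ℕ) :
    Adiam n = insert 0 (hexSector n ∪ (hexSector n).map hexRot.toEmbedding
      ∪ (hexSector n).map hexRot.symm.toEmbedding) := by
  ext x
  simp only [mem_Adiam, mem_insert, mem_union, mem_map_equiv, Equiv.symm_symm, mem_hexSector,
    hexRot, Equiv.coe_fn_mk, Equiv.coe_fn_symm_mk, Prod.ext_iff, Prod.fst_zero, Prod.snd_zero]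
  omega

lemma card_Adiam (n : ℕ) : (Adiam n).card = 3 * n ^ 2 + 3 * n + 1 := by
  rw [Adiam_eq_insert_hexSectors, card_insert_of_notMem, card_union_of_disjoint,
    card_union_of_disjoint, card_map, card_map, card_hexSector]
  · ring
  all_goals
    simp only [disjoint_left, mem_union, mem_map_equiv, Equiv.symm_symm, mem_hexSector, hexRot,
      Equiv.coe_fn_mk, Equiv.coe_fn_symm_mk, Prod.fst_zero, Prod.snd_zero]
    omega

def diagSites (n : ℕ) : Finset (ℤ × ℤ) := (Adiam n).filter fun x => x.1 = x.2

def offDiagCover (n : ℕ) : Finset (ℤ × ℤ) :=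
  (((Adiam n).filter fun x => x.1 ≠ x.2).biUnion Ebox).filter fun y => y.1 ≠ y.2

lemma mem_diagSites_of_mem_Ebox {n : ℕ} {x y : ℤ × ℤ} (hx : x ∈ Adiam n) (hxd : x.1 ≠ x.2)
    (hy : y ∈ Ebox x) (hyd : y.1 = y.2) : y ∈ diagSites n := by
  rw [mem_Adiam] at hx
  rw [mem_Ebox] at hy
  rw [diagSites, mem_filter, mem_Adiam]
  omega

lemma card_diagSites (n : ℕ) : (diagSites n).card = 2 * n + 1 := by
  have hdiag : diagSites n = (Icc (-(n : ℤ)) n).image fun k => (k, k) := by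
    ext x
    simp only [diagSites, mem_filter, mem_Adiam, mem_image, mem_Icc, Prod.ext_iff]
    constructor
    · rintro ⟨hx, hxd⟩
      exact ⟨x.1, by omega, rfl, hxd⟩
    · rintro ⟨k, hk, h1, h2⟩
      omega
  rw [hdiag, card_image_of_injective _ fun _ _ h => congrArg Prod.fst h, Int.card_Icc]
  omega

lemma offDiagCover_subset (n : ℕ) : offDiagCover n ⊆ Adiam (n + 2) := by
  intro y hy
  obtain ⟨x, hx, hyx⟩ := mem_biUnion.1 (mem_filter.1 hy).1
  have hxA := mem_Adiam.1 (mem_filter.1 hx).1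
  rw [mem_Ebox] at hyx
  rw [mem_Adiam]
  push_cast
  omega

lemma card_offDiagCover_le (n : ℕ) : (offDiagCover n).card ≤ 3 * n ^ 2 + 15 * n + 19 :=
  (card_le_card (offDiagCover_subset n)).trans_eq (by rw [card_Adiam]; ring)

lemma le_card_offDiagCover (n : ℕ) : 3 * n ^ 2 + n ≤ (offDiagCover n).card := by
  have hsub : (Adiam n).filter (fun x => ¬x.1 = x.2) ⊆ offDiagCover n := fun x hx =>
    mem_filter.2 ⟨mem_biUnion.2 ⟨x, hx, mem_Ebox.2 (by omega)⟩, (mem_filter.1 hx).2⟩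
  have hsplit := card_filter_add_card_filter_not (s := Adiam n) fun x => x.1 = x.2
  rw [card_Adiam, ← diagSites, card_diagSites] at hsplit
  have := card_le_card hsub
  omega

lemma tendsto_quadratic_div_quadratic (a b c A B C : ℝ) (hA : A ≠ 0) :
    Tendsto (fun n : ℕ => (a * n ^ 2 + b * n + c) / (A * n ^ 2 + B * n + C)) atTop
      (𝓝 (a / A)) := by
  have hn : Tendsto (fun n : ℕ => (n : ℝ)) atTop atTop := tendsto_natCast_atTop_atTop
  have hn2 : Tendsto (fun n : ℕ => (n : ℝ) ^ 2) atTop atTop :=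
    (tendsto_pow_atTop two_ne_zero).comp hn
  have lower_order (p q r : ℝ) : Tendsto (fun n : ℕ => p + q / n + r / n ^ 2) atTop (𝓝 p) := by
    simpa using (tendsto_const_nhds.add (tendsto_const_nhds.div_atTop hn)).add
      (tendsto_const_nhds.div_atTop hn2)
  refine ((lower_order a b c).div (lower_order A B C) hA).congr' ?_
  filter_upwards [eventually_ne_atTop 0] with n hn0
  have hn0 : (n : ℝ) ≠ 0 := Nat.cast_ne_zero.2 hn0
  rw [Pi.div_apply, ← mul_div_mul_right _ _ (pow_ne_zero 2 hn0)]
  congr 1 <;> field_simp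

lemma tendsto_card_offDiagCover_div :
    Tendsto (fun n : ℕ => ((offDiagCover n).card : ℝ) / (3 * n ^ 2 + 3 * n + 1)) atTop (𝓝 1) := by
  have hlower := tendsto_quadratic_div_quadratic 3 1 0 3 3 1 three_ne_zero
  have hupper := tendsto_quadratic_div_quadratic 3 15 19 3 3 1 three_ne_zero
  rw [div_self three_ne_zero] at hlower hupper
  simp only [one_mul, add_zero] at hlower
  refine tendsto_of_tendsto_of_tendsto_of_le_of_le hlower hupper (fun n => ?_) (fun n => ?_) <;>
    dsimp only <;> gcongr
  · exact_mod_cast le_card_offDiagCover n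
  · exact_mod_cast card_offDiagCover_le n

lemma forall_Zfield_le_iff {α : Type*} (Y : ℤ × ℤ → α → ℝ) (ω : α) (n : ℕ) {u : ℝ}
    (hu : 0 ≤ u) : (∀ x ∈ Adiam n, Zfield Y x ω ≤ u) ↔
      ∀ y ∈ diagSites n ∪ offDiagCover n, Y y ω ≤ if y.1 = y.2 then u / 9 else u := by
  constructor
  · intro h y hy
    rcases mem_union.1 hy with hyD | hyO
    · obtain ⟨hyA, hyd⟩ := mem_filter.1 hyD
      have := h y hyA
      rw [Zfield, if_pos hyd] at this
      rw [if_pos hyd]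
      linarith
    · obtain ⟨hyC, hyd⟩ := mem_filter.1 hyO
      obtain ⟨x, hx, hyx⟩ := mem_biUnion.1 hyC
      obtain ⟨hxA, hxd⟩ := mem_filter.1 hx
      have := h x hxA
      rw [Zfield, if_neg hxd] at this
      rw [if_neg hyd]
      exact (le_sup' (fun z => Y z ω) hyx).trans this
  · intro h x hxA
    rw [Zfield]
    split_ifs with hxd
    · have := h x (mem_union_left _ (mem_filter.2 ⟨hxA, hxd⟩))
      rw [if_pos hxd] at this
      linarith
    · refine sup'_le _ _ fun y hyx => ?_
      by_cases hyd : y.1 = y.2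
      · have := h y (mem_union_left _ (mem_diagSites_of_mem_Ebox hxA hxd hyx hyd))
        rw [if_pos hyd] at this
        linarith
      · have := h y (mem_union_right _
          (mem_filter.2 ⟨mem_biUnion.2 ⟨x, mem_filter.2 ⟨hxA, hxd⟩, hyx⟩, hyd⟩))
        rwa [if_neg hyd] at this

section Probability

open ProbabilityTheory

variable {μ : Measure Ω} {Y : ℤ × ℤ → Ω → ℝ}

lemma ProbabilityTheory.iIndepFun.measure_forall_le {ι : Type*} {X : ι → Ω → ℝ}
    (h : iIndepFun X μ) (S : Finset ι) (t : ι → ℝ) :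
    μ {ω | ∀ i ∈ S, X i ω ≤ t i} = ∏ i ∈ S, μ {ω | X i ω ≤ t i} := by
  have hset : {ω | ∀ i ∈ S, X i ω ≤ t i} = ⋂ i ∈ S, X i ⁻¹' Set.Iic (t i) := by
    ext ω
    simp
  rw [hset, h.meas_biInter fun i _ => ⟨_, measurableSet_Iic, rfl⟩]
  rfl

lemma measure_le_div_nine
    (hY : ∀ x, ∀ y : ℝ, 0 < y → (μ {ω | Y x ω ≤ y}).toReal = Real.exp (-(y⁻¹ / 9)))
    (x : ℤ × ℤ) {y : ℝ} (hy : 0 < y) :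
    (μ {ω | Y x ω ≤ y / 9}).toReal = Real.exp (-y⁻¹) := by
  rw [hY x _ (by positivity)]
  field_simp

lemma measure_Zfield_le (hind : iIndepFun Y μ)
    (hY : ∀ x, ∀ y : ℝ, 0 < y → (μ {ω | Y x ω ≤ y}).toReal = Real.exp (-(y⁻¹ / 9)))
    (x : ℤ × ℤ) {y : ℝ} (hy : 0 < y) :
    (μ {ω | Zfield Y x ω ≤ y}).toReal = Real.exp (-y⁻¹) := by
  by_cases hx : x.1 = x.2
  · simp_rw [Zfield, if_pos hx, ← le_div_iff₀' (by norm_num : (0 : ℝ) < 9)]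
    exact measure_le_div_nine hY x hy
  · simp_rw [Zfield, if_neg hx, sup'_le_iff]
    rw [hind.measure_forall_le, ENNReal.toReal_prod, prod_eq_pow_card fun z _ => hY z y hy,
      card_Ebox, ← Real.exp_nat_mul]
    ring_nf

lemma measure_forall_Zfield_le (hind : iIndepFun Y μ)
    (hY : ∀ x, ∀ y : ℝ, 0 < y → (μ {ω | Y x ω ≤ y}).toReal = Real.exp (-(y⁻¹ / 9)))
    (n : ℕ) {u : ℝ} (hu : 0 < u) :
    (μ {ω | ∀ x ∈ Adiam n, Zfield Y x ω ≤ u}).toReal =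
      Real.exp (-u⁻¹) ^ (diagSites n).card * Real.exp (-(u⁻¹ / 9)) ^ (offDiagCover n).card := by
  simp_rw [forall_Zfield_le_iff Y _ n hu.le]
  have hdisj : Disjoint (diagSites n) (offDiagCover n) := disjoint_filter_filter_not _ _ _
  rw [hind.measure_forall_le, ENNReal.toReal_prod, prod_union hdisj]
  congr 1
  · exact prod_eq_pow_card fun y hy => by
      rw [if_pos (mem_filter.1 hy).2, measure_le_div_nine hY y hu]
  · exact prod_eq_pow_card fun y hy => by
      rw [if_neg (mem_filter.1 hy).2, hY y u hu]

lemma tendsto_measure_forall_Zfield_le (hind : iIndepFun Y μ)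
    (hY : ∀ x, ∀ y : ℝ, 0 < y → (μ {ω | Y x ω ≤ y}).toReal = Real.exp (-(y⁻¹ / 9)))
    {τ : ℝ} (hτ : 0 < τ) :
    Tendsto (fun n : ℕ =>
        (μ {ω | ∀ x ∈ Adiam n, Zfield Y x ω ≤ (3 * (n : ℝ) ^ 2 + 3 * n + 1) / τ}).toReal)
      atTop (𝓝 (Real.exp (-(τ / 9)))) := by
  have hdiag : Tendsto (fun n : ℕ => ((diagSites n).card : ℝ) / (3 * n ^ 2 + 3 * n + 1))
      atTop (𝓝 0) := by
    simpa [card_diagSites, add_comm, mul_comm] using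
      tendsto_quadratic_div_quadratic 0 2 1 3 3 1 three_ne_zero
  have hexp := (hdiag.const_mul τ).add (tendsto_card_offDiagCover_div.const_mul (τ / 9))
  rw [mul_zero, zero_add, mul_one] at hexp
  refine ((Real.continuous_exp.tendsto _).comp hexp.neg).congr fun n => ?_
  rw [measure_forall_Zfield_le hind hY n (by positivity), ← Real.exp_nat_mul, ← Real.exp_nat_mul,
    ← Real.exp_add]
  simp only [Function.comp, inv_div]
  ring_nf

end Probability

theorem example3_2_general (μ : Measure Ω) (Y : ℤ × ℤ → Ω → ℝ)
    (hind : ProbabilityTheory.iIndepFun Y μ)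
    (hY : ∀ x, ∀ y : ℝ, 0 < y → (μ {ω | Y x ω ≤ y}).toReal = Real.exp (-(y⁻¹ / 9))) :
    (∀ n : ℕ, ((Adiam n).card : ℤ) = 3 * (n : ℤ) ^ 2 + 3 * (n : ℤ) + 1) ∧
    (∀ x : ℤ × ℤ, ∀ y : ℝ, 0 < y →
      (μ {ω | Zfield Y x ω ≤ y}).toReal = Real.exp (-y⁻¹)) ∧
    ∀ τ : ℝ, 0 < τ →
      Tendsto (fun n : ℕ =>
          (μ {ω | ∀ x ∈ Adiam n, Zfield Y x ω ≤ (3 * (n : ℝ) ^ 2 + 3 * n + 1) / τ}).toReal)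
        atTop (nhds (Real.exp (-(τ / 9)))) :=
  ⟨fun n => mod_cast card_Adiam n, fun x _ hy => measure_Zfield_le hind hY x hy,
    fun _ hτ => tendsto_measure_forall_Zfield_le hind hY hτ⟩

/-- **Example 3.2 (extremal index 1/9).** For the 1-dependent field `Z` built from iid `Y` with
`F_Y(y) = exp(-y⁻¹/9)`, the margins are unit Fréchet, `#Aₙ = 3n²+3n+1`, and for
`uₙ(τ) = f(n)/τ` one has `P(⋁_{x∈Aₙ} Z(x) ≤ uₙ(τ)) → exp(-τ/9)`, i.e. `θ_A = 1/9`. -/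
theorem example3_2 (μ : Measure Ω) [IsProbabilityMeasure μ] (Y : ℤ × ℤ → Ω → ℝ)
    (hmeas : ∀ x, Measurable (Y x))
    (hind : ProbabilityTheory.iIndepFun Y μ)
    (hY : ∀ x, ∀ y : ℝ, 0 < y → (μ {ω | Y x ω ≤ y}).toReal = Real.exp (-(y⁻¹ / 9)))
    (hY0 : ∀ x, ∀ y : ℝ, y ≤ 0 → (μ {ω | Y x ω ≤ y}).toReal = 0) :
    (∀ n : ℕ, ((Adiam n).card : ℤ) = 3 * (n : ℤ) ^ 2 + 3 * (n : ℤ) + 1) ∧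
    (∀ x : ℤ × ℤ, ∀ y : ℝ, 0 < y →
      (μ {ω | Zfield Y x ω ≤ y}).toReal = Real.exp (-y⁻¹)) ∧
    ∀ τ : ℝ, 0 < τ →
      Tendsto (fun n : ℕ =>
          (μ {ω | ∀ x ∈ Adiam n, Zfield Y x ω ≤ (3 * (n : ℝ) ^ 2 + 3 * n + 1) / τ}).toReal)
        atTop (nhds (Real.exp (-(τ / 9)))) :=
  example3_2_general μ Y hind hY
end
end

section
/- Let {Y(x) : x ∈ ℤ²} be independent and identically distributed random variables with common distribution function F_Y(y) = exp(−y^{−1}/9) for y > 0, define Z(x) = 9·Y(x) if π_1(x) = π_2(x), and Z(x) = ⋁_{y∈E(x)} Y(y) otherwise, where E(x) = {y ∈ ℤ² : |π_1(y) − π_1(x)| ≤ 1 and |π_2(y) − π_2(x)| ≤ 1}, and let A_n = {x ∈ ℤ² : −n ≤ π_1(x) ≤ n and (−n) ∨ (π_1(x) − n) ≤ π_2(x) ≤ (π_1(x) + n) ∧ n}. If C, D ⊂ A_n are sets such that, for each i = 1,2, π_i(C) and π_i(D) are sets of consecutive values of π_i(A_n) separated by at least 2 values of π_i(A_n), then the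 random variables ⋁_{x∈C} Z(x) and ⋁_{x∈D} Z(x) are independent; hence α(l_n,u_n) = 0 for any l_n ≥ 2 and the sequence Z_A satisfies condition D(u_n,k_n,l_n) for all integer sequences k_n → ∞, l_n → ∞ with k_n l_n f_i(n)/f(n) → 0, i = 1,2, and any real levels u_n. -/
open MeasureTheory Filter Topology

noncomputable section

variable {Ω : Type*} [MeasurableSpace Ω]

/-- The `i`-th cartesian projection of a finite set of points of `ℤ²`. -/
def projSetZ (i : Fin 2) (B : Finset (ℤ × ℤ)) : Finset ℤ :=
  if i = 0 then B.image Prod.fst else B.image Prod.snd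

/-- `I` is a set of consecutive values of `T`. -/
def ConsecInZ (T I : Finset ℤ) : Prop :=
  I ⊆ T ∧ ∀ a ∈ I, ∀ b ∈ I, ∀ c ∈ T, a ≤ c → c ≤ b → c ∈ I

/-- `I` lies entirely before `J`, with at least `l` values of `T` strictly in between. -/
def SepOrderedZ (T I J : Finset ℤ) (l : ℕ) : Prop :=
  (∀ a ∈ I, ∀ b ∈ J, a < b) ∧
    l ≤ (T.filter fun c => (∀ a ∈ I, a < c) ∧ ∀ b ∈ J, c < b).card

/-- `I` and `J` are separated by at least `l` values of `T`. -/
def SepInZ (T I J : Finset ℤ) (l : ℕ) : Prop := SepOrderedZ T I J l ∨ SepOrderedZ T J I l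

/-- `C, D ⊆ Aₙ` are, in each coordinate direction, sets of consecutive values of the
projections of `Aₙ`, separated by at least `l` values of those projections. -/
def SepPairZ (An C D : Finset (ℤ × ℤ)) (l : ℕ) : Prop :=
  C ⊆ An ∧ D ⊆ An ∧ ∀ i : Fin 2,
    ConsecInZ (projSetZ i An) (projSetZ i C) ∧ ConsecInZ (projSetZ i An) (projSetZ i D) ∧
      SepInZ (projSetZ i An) (projSetZ i C) (projSetZ i D) l

/-- The mixing coefficient `α(lₙ, uₙ)`. -/
def alphaMixZ (μ : Measure Ω) (Z : ℤ × ℤ → Ω → ℝ) (An : Finset (ℤ × ℤ)) (l : ℕ)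
    (u : ℝ) : ℝ :=
  sSup {v | ∃ C D : Finset (ℤ × ℤ), SepPairZ An C D l ∧
    v = |(μ {ω | ∀ x ∈ C ∪ D, Z x ω ≤ u}).toReal -
      (μ {ω | ∀ x ∈ C, Z x ω ≤ u}).toReal * (μ {ω | ∀ x ∈ D, Z x ω ≤ u}).toReal|}

/-- Condition `D(uₙ, kₙ, lₙ)` of coordinatewise long range dependence. -/
def CondDZ (μ : Measure Ω) (Z : ℤ × ℤ → Ω → ℝ) (A : ℕ → Finset (ℤ × ℤ))
    (u : ℕ → ℝ) (k l : ℕ → ℕ) : Prop :=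
  (∀ n, 0 < k n) ∧ (∀ n, 0 < l n) ∧
  Tendsto (fun n => (l n : ℝ)) atTop atTop ∧
  Tendsto (fun n => (k n : ℝ)) atTop atTop ∧
  (∀ i : Fin 2, Tendsto
    (fun n => (k n : ℝ) * (l n : ℝ) * ((projSetZ i (A n)).card : ℝ) / ((A n).card : ℝ))
    atTop (nhds 0)) ∧
  Tendsto (fun n => (k n : ℝ) ^ 2 * alphaMixZ μ Z (A n) (l n) (u n)) atTop (nhds 0)

/-!
Each `Z(x)` is a function of the `Y(y)`, `y ∈ E(x)`, so a maximum of `Z` over `C` is measurable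
for the σ-algebra generated by `Y` on the `1`-neighbourhood of `C`. When at least two values of
`π₁(Aₙ)` lie between `π₁(C)` and `π₁(D)`, first coordinates of points of `C` and of `D` differ by
at least `3`, so these neighbourhoods are disjoint and, the `Y(y)` being independent, so are the
two σ-algebras. Hence every term in `α(l, u)` vanishes for `l ≥ 2`, and as `lₙ → ∞` the sequence
`kₙ² α(lₙ, uₙ)` is eventually `0`.
-/

open ProbabilityTheory

lemma self_mem_Ebox (x : ℤ × ℤ) : x ∈ Ebox x := by
  simp only [Ebox, Finset.mem_product, Finset.mem_Icc]
  omega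

lemma SepOrderedZ.lt_sub {T I J : Finset ℤ} {l : ℕ} (h : SepOrderedZ T I J l)
    {a b : ℤ} (ha : a ∈ I) (hb : b ∈ J) : (l : ℤ) < b - a := by
  have hsub : (T.filter fun c => (∀ a ∈ I, a < c) ∧ ∀ b ∈ J, c < b) ⊆ Finset.Ioo a b :=
    fun c hc => Finset.mem_Ioo.mpr ⟨(Finset.mem_filter.mp hc).2.1 a ha,
      (Finset.mem_filter.mp hc).2.2 b hb⟩
  have hcard := h.2.trans (Finset.card_le_card hsub)
  rw [Int.card_Ioo] at hcard
  have := h.1 a ha b hb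
  omega

lemma SepInZ.lt_abs_sub {T I J : Finset ℤ} {l : ℕ} (h : SepInZ T I J l)
    {a b : ℤ} (ha : a ∈ I) (hb : b ∈ J) : (l : ℤ) < |a - b| := by
  rcases h with h | h
  · rw [abs_sub_comm]
    exact (h.lt_sub ha hb).trans_le (le_abs_self _)
  · exact (h.lt_sub hb ha).trans_le (le_abs_self _)

lemma disjoint_biUnion_Ebox_of_sepPairZ {An C D : Finset (ℤ × ℤ)} {l : ℕ}
    (h : SepPairZ An C D l) (hl : 2 ≤ l) : Disjoint (C.biUnion Ebox) (D.biUnion Ebox) := by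
  have hsep := (h.2.2 0).2.2
  have hproj : ∀ {B : Finset (ℤ × ℤ)} {x}, x ∈ B → x.1 ∈ projSetZ 0 B := fun hx => by
    rw [projSetZ, if_pos rfl]
    exact Finset.mem_image_of_mem _ hx
  rw [Finset.disjoint_left]
  rintro y hyC hyD
  obtain ⟨x, hx, hyx⟩ := Finset.mem_biUnion.mp hyC
  obtain ⟨x', hx', hyx'⟩ := Finset.mem_biUnion.mp hyD
  have hgap := hsep.lt_abs_sub (hproj hx) (hproj hx')
  simp only [Ebox, Finset.mem_product, Finset.mem_Icc] at hyx hyx'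
  rw [lt_abs] at hgap
  omega

abbrev sigmaOn (Y : ℤ × ℤ → Ω → ℝ) (S : Finset (ℤ × ℤ)) : MeasurableSpace Ω :=
  ⨆ y ∈ (S : Set (ℤ × ℤ)), MeasurableSpace.comap (Y y) inferInstance

lemma measurable_sigmaOn {α : Type*} {Y : ℤ × ℤ → α → ℝ} {S : Finset (ℤ × ℤ)} {y : ℤ × ℤ}
    (hy : y ∈ S) : Measurable[sigmaOn Y S] (Y y) :=
  Measurable.of_comap_le <|
    le_iSup₂ (f := fun y (_ : y ∈ (S : Set (ℤ × ℤ))) => MeasurableSpace.comap (Y y) _) y hy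

lemma measurable_Zfield {α : Type*} {m : MeasurableSpace α} {Y : ℤ × ℤ → α → ℝ} {x : ℤ × ℤ}
    (hY : ∀ y ∈ Ebox x, Measurable[m] (Y y)) : Measurable[m] (Zfield Y x) := by
  unfold Zfield
  split_ifs
  · exact (hY x (self_mem_Ebox x)).const_mul 9
  · simpa only [← Finset.sup'_apply] using Finset.measurable_sup' (Ebox_nonempty x) hY

lemma measurable_sup'_Zfield {α : Type*} {m : MeasurableSpace α} {Y : ℤ × ℤ → α → ℝ}
    {B : Finset (ℤ × ℤ)} (hB : B.Nonempty) (hY : ∀ y ∈ B.biUnion Ebox, Measurable[m] (Y y)) :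
    Measurable[m] fun ω => B.sup' hB fun x => Zfield Y x ω := by
  simpa only [← Finset.sup'_apply] using Finset.measurable_sup' hB fun x hx =>
    measurable_Zfield fun y hy => hY y (Finset.mem_biUnion.mpr ⟨x, hx, hy⟩)

lemma measurableSet_forall_Zfield_le {α : Type*} {m : MeasurableSpace α}
    {Y : ℤ × ℤ → α → ℝ} {B : Finset (ℤ × ℤ)} (hY : ∀ y ∈ B.biUnion Ebox, Measurable[m] (Y y))
    (u : ℝ) : MeasurableSet[m] {ω | ∀ x ∈ B, Zfield Y x ω ≤ u} := by
  simpa only [Set.ofPred_forall] using B.measurableSet_biInter fun x hx =>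
    measurableSet_le (measurable_Zfield fun y hy => hY y (Finset.mem_biUnion.mpr ⟨x, hx, hy⟩))
      measurable_const

section Independence

variable {μ : Measure Ω} {Y : ℤ × ℤ → Ω → ℝ}

lemma ProbabilityTheory.iIndepFun.indep_sigmaOn (hmeas : ∀ x, Measurable (Y x))
    (hind : iIndepFun Y μ) {S T : Finset (ℤ × ℤ)} (hST : Disjoint S T) :
    Indep (sigmaOn Y S) (sigmaOn Y T) μ :=
  indep_iSup_of_disjoint (fun x => (hmeas x).comap_le) hind.iIndep
    (Finset.disjoint_coe.mpr hST)

lemma indepFun_sup'_Zfield (hmeas : ∀ x, Measurable (Y x)) (hind : iIndepFun Y μ)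
    {C D : Finset (ℤ × ℤ)} (hCD : Disjoint (C.biUnion Ebox) (D.biUnion Ebox))
    (hC : C.Nonempty) (hD : D.Nonempty) :
    IndepFun (fun ω => C.sup' hC fun x => Zfield Y x ω)
      (fun ω => D.sup' hD fun x => Zfield Y x ω) μ := by
  rw [IndepFun_iff_Indep]
  exact indep_of_indep_of_le (hind.indep_sigmaOn hmeas hCD)
    (measurable_sup'_Zfield hC fun _ => measurable_sigmaOn).comap_le
    (measurable_sup'_Zfield hD fun _ => measurable_sigmaOn).comap_le

lemma measure_forall_Zfield_le_union (hmeas : ∀ x, Measurable (Y x)) (hind : iIndepFun Y μ)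
    {C D : Finset (ℤ × ℤ)} (hCD : Disjoint (C.biUnion Ebox) (D.biUnion Ebox))
    (u : ℝ) :
    μ {ω | ∀ x ∈ C ∪ D, Zfield Y x ω ≤ u} =
      μ {ω | ∀ x ∈ C, Zfield Y x ω ≤ u} * μ {ω | ∀ x ∈ D, Zfield Y x ω ≤ u} := by
  have hinter : {ω | ∀ x ∈ C ∪ D, Zfield Y x ω ≤ u} =
      {ω | ∀ x ∈ C, Zfield Y x ω ≤ u} ∩ {ω | ∀ x ∈ D, Zfield Y x ω ≤ u} := by
    ext ω
    simp only [Finset.forall_mem_union, Set.mem_ofPred_eq, Set.mem_inter_iff]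
  rw [hinter]
  exact (Indep_iff _ _ μ).mp (hind.indep_sigmaOn hmeas hCD) _ _
    (measurableSet_forall_Zfield_le (fun _ => measurable_sigmaOn) u)
    (measurableSet_forall_Zfield_le (fun _ => measurable_sigmaOn) u)

end Independence

lemma alphaMixZ_eq_zero {μ : Measure Ω} {Z : ℤ × ℤ → Ω → ℝ} {An : Finset (ℤ × ℤ)} {l : ℕ}
    {u : ℝ} (h : ∀ C D, SepPairZ An C D l → μ {ω | ∀ x ∈ C ∪ D, Z x ω ≤ u} =
      μ {ω | ∀ x ∈ C, Z x ω ≤ u} * μ {ω | ∀ x ∈ D, Z x ω ≤ u}) :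
    alphaMixZ μ Z An l u = 0 := by
  refine le_antisymm (Real.sSup_nonpos ?_) (Real.sSup_nonneg ?_) <;> rintro _ ⟨C, D, hCD, rfl⟩
  · rw [h C D hCD, ENNReal.toReal_mul, sub_self, abs_zero]
  · exact abs_nonneg _

lemma condDZ_of_eventually_alphaMixZ_eq_zero {μ : Measure Ω} {Z : ℤ × ℤ → Ω → ℝ}
    {A : ℕ → Finset (ℤ × ℤ)} {u : ℕ → ℝ} {k l : ℕ → ℕ} (hk : ∀ n, 0 < k n) (hl : ∀ n, 0 < l n)
    (hktop : Tendsto (fun n => (k n : ℝ)) atTop atTop)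
    (hltop : Tendsto (fun n => (l n : ℝ)) atTop atTop)
    (hproj : ∀ i : Fin 2, Tendsto
      (fun n => (k n : ℝ) * (l n : ℝ) * ((projSetZ i (A n)).card : ℝ) / ((A n).card : ℝ))
      atTop (nhds 0))
    (hα : ∀ᶠ n in atTop, alphaMixZ μ Z (A n) (l n) (u n) = 0) : CondDZ μ Z A u k l :=
  ⟨hk, hl, hltop, hktop, hproj,
    tendsto_const_nhds.congr' (hα.mono fun n hn => by simp only [hn, mul_zero])⟩

theorem example3_2_D_general (μ : Measure Ω) (Y : ℤ × ℤ → Ω → ℝ)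
    (hmeas : ∀ x, Measurable (Y x))
    (hind : ProbabilityTheory.iIndepFun Y μ) :
    (∀ n : ℕ, ∀ C D : Finset (ℤ × ℤ), ∀ (hC : C.Nonempty) (hD : D.Nonempty),
      SepPairZ (Adiam n) C D 2 →
        ProbabilityTheory.IndepFun (fun ω => C.sup' hC fun x => Zfield Y x ω)
          (fun ω => D.sup' hD fun x => Zfield Y x ω) μ) ∧
    (∀ n : ℕ, ∀ l : ℕ, 2 ≤ l → ∀ u : ℝ, alphaMixZ μ (Zfield Y) (Adiam n) l u = 0) ∧
    ∀ (u : ℕ → ℝ) (k l : ℕ → ℕ), (∀ n, 0 < k n) → (∀ n, 0 < l n) →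
      Tendsto (fun n => (k n : ℝ)) atTop atTop →
      Tendsto (fun n => (l n : ℝ)) atTop atTop →
      (∀ i : Fin 2, Tendsto
        (fun n => (k n : ℝ) * (l n : ℝ) * ((projSetZ i (Adiam n)).card : ℝ) /
          ((Adiam n).card : ℝ)) atTop (nhds 0)) →
      CondDZ μ (Zfield Y) Adiam u k l := by
  have hα : ∀ n l, 2 ≤ l → ∀ u, alphaMixZ μ (Zfield Y) (Adiam n) l u = 0 :=
    fun n l hl u => alphaMixZ_eq_zero fun C D hCD =>
      measure_forall_Zfield_le_union hmeas hind (disjoint_biUnion_Ebox_of_sepPairZ hCD hl) u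
  refine ⟨fun n C D hC hD hCD => indepFun_sup'_Zfield hmeas hind
    (disjoint_biUnion_Ebox_of_sepPairZ hCD le_rfl) hC hD, hα, ?_⟩
  intro u k l hk hl hktop hltop hproj
  exact condDZ_of_eventually_alphaMixZ_eq_zero hk hl hktop hltop hproj <|
    (hltop.eventually_ge_atTop 2).mono fun n hn => hα n (l n) (by exact_mod_cast hn) (u n)

/-- **Example 3.2 (condition `D`).** For the 1-dependent field `Z`, maxima over sets `C, D ⊆ Aₙ`
that are coordinatewise separated by at least 2 values are independent; hence `α(lₙ,uₙ) = 0` for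
`lₙ ≥ 2` and condition `D(uₙ,kₙ,lₙ)` holds for all admissible sequences `kₙ, lₙ` and all
levels `uₙ`. -/
theorem example3_2_D (μ : Measure Ω) [IsProbabilityMeasure μ] (Y : ℤ × ℤ → Ω → ℝ)
    (hmeas : ∀ x, Measurable (Y x))
    (hind : ProbabilityTheory.iIndepFun Y μ)
    (hY : ∀ x, ∀ y : ℝ, 0 < y → (μ {ω | Y x ω ≤ y}).toReal = Real.exp (-(y⁻¹ / 9)))
    (hY0 : ∀ x, ∀ y : ℝ, y ≤ 0 → (μ {ω | Y x ω ≤ y}).toReal = 0) :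
    (∀ n : ℕ, ∀ C D : Finset (ℤ × ℤ), ∀ (hC : C.Nonempty) (hD : D.Nonempty),
      SepPairZ (Adiam n) C D 2 →
        ProbabilityTheory.IndepFun (fun ω => C.sup' hC fun x => Zfield Y x ω)
          (fun ω => D.sup' hD fun x => Zfield Y x ω) μ) ∧
    (∀ n : ℕ, ∀ l : ℕ, 2 ≤ l → ∀ u : ℝ, alphaMixZ μ (Zfield Y) (Adiam n) l u = 0) ∧
    ∀ (u : ℕ → ℝ) (k l : ℕ → ℕ), (∀ n, 0 < k n) → (∀ n, 0 < l n) →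
      Tendsto (fun n => (k n : ℝ)) atTop atTop →
      Tendsto (fun n => (l n : ℝ)) atTop atTop →
      (∀ i : Fin 2, Tendsto
        (fun n => (k n : ℝ) * (l n : ℝ) * ((projSetZ i (Adiam n)).card : ℝ) /
          ((Adiam n).card : ℝ)) atTop (nhds 0)) →
      CondDZ μ (Zfield Y) Adiam u k l :=
  example3_2_D_general μ Y hmeas hind
end
end
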